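/- arXiv:math/0509392 — 3 statements merged into one kernel-verified Lean document; each statement's English description precedes it below -/
import Mathlib

section
/- For any function Ψ : 2^{<ω} → ω, there exists a partial function ξ from ω to 2 whose domain has infinite complement in ω, such that the tree T(ξ) = { Ψ*(t) : t ∈ 2^{<ω}, t compatible with ξ } is a binary tree, i.e., every node of T(ξ) has at most 2 immediate successors in T(ξ). -/
/-! Call a level `m` good for `ξ` (`ReflectsEqv`) if two `ξ`-compatible sequences of length `m` with
the same `Ψ*`-image are always `≡`-equivalent. Take `ξ = ⊥ v₀ ⊥ v₁ ⊥ ⋯`, undefined exactly at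
`m₀ = 0 < m₁ < ⋯`, where the block `vₙ` is chosen so that for each of the finitely many `b` of
length `mₙ`, flipping the bit after `b` either changes `Ψ*(b⌢i⌢vₙ)` or is invisible to `Ψ` on
all further extensions (`FlipSettled`); both alternatives survive lengthening `vₙ`, so one block
serves all `b`. Inductively every `mₙ` is then good. Above a node `Ψ*(s)` with `mₙ ≤ |s| < mₙ₊₁`
every position after `mₙ` is forced, so each one-step extension `y` is `≡`-equivalent to the
sequence obtained from `s` by setting the free bit `mₙ` to `y(mₙ)`: at most two successors. -/

/-- `P` is the map `Ψ*` defined by recursion from `Ψ`: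
`Ψ*(⟨⟩) = ⟨⟩` and `Ψ*(t⌢⟨i⟩) = Ψ*(t)⌢⟨Ψ(t⌢⟨i⟩)⟩`. -/
def IsPsiStar (Ψ : List Bool → ℕ) (P : List Bool → List ℕ) : Prop :=
  P [] = [] ∧ ∀ (t : List Bool) (i : Bool), P (t ++ [i]) = P t ++ [Ψ (t ++ [i])]

/-- `s ≡ t` : `Ψ(s⌢θ) = Ψ(t⌢θ)` for all finite binary sequences `θ`. -/
def Eqv (Ψ : List Bool → ℕ) (s t : List Bool) : Prop :=
  ∀ θ : List Bool, Ψ (s ++ θ) = Ψ (t ++ θ)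

/-- `t` is compatible with the partial function `ξ : ω ⇀ 2`. -/
def Compat (ξ : ℕ → Option Bool) (t : List Bool) : Prop :=
  ∀ k < t.length, ∀ b, ξ k = some b → t[k]? = some b

/-- `W^ℓ(ξ)` for finite `ℓ`: compatible sequences of length `≤ ℓ`. -/
def Wfin (ξ : ℕ → Option Bool) (ℓ : ℕ) : Set (List Bool) :=
  {t | t.length ≤ ℓ ∧ Compat ξ t}

/-- `W(ξ) = W^ω(ξ)`: all sequences compatible with `ξ`. -/
def Wall (ξ : ℕ → Option Bool) : Set (List Bool) :=
  {t | Compat ξ t}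

/-- the set of minimal proper extensions of `η` in `T`. -/
def succT (T : Set (List ℕ)) (η : List ℕ) : Set (List ℕ) :=
  {ν | ν ∈ T ∧ η <+: ν ∧ η ≠ ν ∧ ∀ ρ ∈ T, η <+: ρ → ρ <+: ν → ρ = η ∨ ρ = ν}

/-- a tree is binary if every node has at most 2 immediate successors. -/
def IsBinary (T : Set (List ℕ)) : Prop :=
  ∀ η ∈ T, (succT T η).Finite ∧ (succT T η).ncard ≤ 2

theorem List.eq_of_prefix_of_length_eq {α : Type*} {p q l : List α} (hp : p <+: l) (hq : q <+: l)
    (h : p.length = q.length) : p = q := by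
  rw [List.prefix_iff_eq_take] at hp hq
  rw [hp, hq, h]

theorem List.eq_take_append_getD_cons_drop {α : Type*} {l : List α} {m : ℕ} (d : α)
    (hm : m < l.length) : l = l.take m ++ l.getD m d :: l.drop (m + 1) := by
  rw [List.getD_eq_getElem l d hm, ← List.drop_eq_getElem_cons hm, List.take_append_drop]

namespace Eqv

variable {Ψ : List Bool → ℕ} {s t u : List Bool}

theorem refl (s : List Bool) : Eqv Ψ s s := fun _ => rfl

theorem symm (h : Eqv Ψ s t) : Eqv Ψ t s := fun θ => (h θ).symm

theorem trans (h₁ : Eqv Ψ s t) (h₂ : Eqv Ψ t u) : Eqv Ψ s u := fun θ => (h₁ θ).trans (h₂ θ)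

theorem append_right (h : Eqv Ψ s t) (θ : List Bool) : Eqv Ψ (s ++ θ) (t ++ θ) := fun θ' => by
  simpa only [List.append_assoc] using h (θ ++ θ')

end Eqv

namespace IsPsiStar

variable {Ψ : List Bool → ℕ} {P : List Bool → List ℕ}

theorem length_eq (hP : IsPsiStar Ψ P) (t : List Bool) : (P t).length = t.length := by
  induction t using List.reverseRecOn with
  | nil => simp [hP.1]
  | append_singleton t i ih => simp [hP.2, ih]

theorem prefix_mono (hP : IsPsiStar Ψ P) {s t : List Bool} (h : s <+: t) : P s <+: P t := by
  obtain ⟨r, rfl⟩ := h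
  induction r using List.reverseRecOn with
  | nil => simp
  | append_singleton r i ih =>
    rw [← List.append_assoc, hP.2]
    exact ih.trans (List.prefix_append _ _)

theorem eq_dropLast_append (hP : IsPsiStar Ψ P) {y : List Bool} (hy : y ≠ []) :
    P y = P y.dropLast ++ [Ψ y] := by
  have := hP.2 y.dropLast (y.getLast hy)
  rwa [List.dropLast_append_getLast] at this

theorem psi_eq_of_eq (hP : IsPsiStar Ψ P) {s t : List Bool} (hs : s ≠ []) (ht : t ≠ [])
    (h : P s = P t) : Ψ s = Ψ t := by
  have := congrArg List.getLast? h
  rw [hP.eq_dropLast_append hs, hP.eq_dropLast_append ht] at this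
  simpa using this

theorem take_eq_take (hP : IsPsiStar Ψ P) {s t : List Bool} (h : P s = P t) (m : ℕ) :
    P (s.take m) = P (t.take m) := by
  have hlen : s.length = t.length := by rw [← hP.length_eq, h, hP.length_eq]
  refine List.eq_of_prefix_of_length_eq (hP.prefix_mono (List.take_prefix m s)) ?_ ?_
  · rw [h]; exact hP.prefix_mono (List.take_prefix m t)
  · simp [hP.length_eq, hlen]

theorem append_eq_append (hP : IsPsiStar Ψ P) {s t : List Bool} (he : Eqv Ψ s t)
    (h : P s = P t) (θ : List Bool) : P (s ++ θ) = P (t ++ θ) := by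
  induction θ using List.reverseRecOn with
  | nil => simpa
  | append_singleton θ i ih =>
    rw [← List.append_assoc, hP.2, ← List.append_assoc, hP.2, ih, List.append_assoc,
      List.append_assoc, he]

end IsPsiStar

namespace Compat

variable {ξ : ℕ → Option Bool} {s t : List Bool}

theorem of_prefix (ht : Compat ξ t) (h : s <+: t) : Compat ξ s := by
  intro k hk b hb
  obtain ⟨r, rfl⟩ := h
  simpa [List.getElem?_append_left hk] using ht k (hk.trans_le (by simp)) b hb

theorem append_getD (hs : Compat ξ s) : Compat ξ (s ++ [(ξ s.length).getD false]) := by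
  intro k hk b hb
  rw [List.length_append, List.length_singleton] at hk
  rcases Nat.lt_succ_iff_lt_or_eq.mp hk with hk | rfl
  · rw [List.getElem?_append_left hk]
    exact hs k hk b hb
  · simp [hb]

theorem drop_eq_drop (hs : Compat ξ s) (ht : Compat ξ t) (hlen : s.length = t.length) {m : ℕ}
    (hdet : ∀ k, m < k → k < s.length → ξ k ≠ none) : s.drop (m + 1) = t.drop (m + 1) := by
  refine List.ext_getElem? fun j => ?_
  rw [List.getElem?_drop, List.getElem?_drop]
  by_cases hj : m + 1 + j < s.length
  · obtain ⟨b, hb⟩ := Option.ne_none_iff_exists'.mp (hdet _ (by omega) hj)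
    rw [hs _ hj b hb, ht _ (hlen ▸ hj) b hb]
  · rw [List.getElem?_eq_none (by omega), List.getElem?_eq_none (by omega)]

theorem drop_eq_block (ht : Compat ξ t) {m : ℕ} {v : List Bool}
    (hlen : t.length = m + v.length + 1) (hv : ∀ j < v.length, ξ (m + j + 1) = v[j]?) :
    t.drop (m + 1) = v := by
  refine List.ext_getElem? fun j => ?_
  rw [List.getElem?_drop]
  by_cases hj : j < v.length
  · have hξ : ξ (m + 1 + j) = some v[j] := by
      rw [Nat.add_right_comm, hv j hj, List.getElem?_eq_getElem hj]
    rw [ht _ (by omega) _ hξ, List.getElem?_eq_getElem hj]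
  · rw [List.getElem?_eq_none (by omega), List.getElem?_eq_none (by omega)]

end Compat

def FlipSettled (Ψ : List Bool → ℕ) (P : List Bool → List ℕ) (b v : List Bool) : Prop :=
  P (b ++ false :: v) = P (b ++ true :: v) → Eqv Ψ (b ++ false :: v) (b ++ true :: v)

section FlipSettled

variable {Ψ : List Bool → ℕ} {P : List Bool → List ℕ} {b v : List Bool}

theorem FlipSettled.eqv (h : FlipSettled Ψ P b v) {i j : Bool}
    (hij : P (b ++ i :: v) = P (b ++ j :: v)) :
    Eqv Ψ (b ++ i :: v) (b ++ j :: v) := by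
  cases i <;> cases j
  exacts [Eqv.refl _, h hij, (h hij.symm).symm, Eqv.refl _]

theorem FlipSettled.append (hP : IsPsiStar Ψ P) (h : FlipSettled Ψ P b v) (w : List Bool) :
    FlipSettled Ψ P b (v ++ w) := fun hw => by
  have hpre : ∀ i : Bool, P (b ++ i :: v) <+: P (b ++ i :: (v ++ w)) := fun i =>
    hP.prefix_mono ⟨w, by simp⟩
  have hv : P (b ++ false :: v) = P (b ++ true :: v) :=
    List.eq_of_prefix_of_length_eq (hpre false) (hw ▸ hpre true) (by simp [hP.length_eq])
  simpa using (h hv).append_right w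

theorem exists_flipSettled_append (hP : IsPsiStar Ψ P) (b u : List Bool) :
    ∃ w, FlipSettled Ψ P b (u ++ w) := by
  by_cases h : Eqv Ψ (b ++ false :: u) (b ++ true :: u)
  · exact ⟨[], fun _ => by simpa using h⟩
  · obtain ⟨θ, hθ⟩ := not_forall.mp h
    refine ⟨θ, fun hPθ => absurd (hP.psi_eq_of_eq (by simp) (by simp) hPθ) ?_⟩
    simpa using hθ

theorem exists_flipSettled_of_finite (hP : IsPsiStar Ψ P) {S : Set (List Bool)} (hS : S.Finite) :
    ∃ v, ∀ b ∈ S, FlipSettled Ψ P b v := by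
  induction S, hS using Set.Finite.induction_on with
  | empty => exact ⟨[], by simp⟩
  | @insert a S _ _ ih =>
    obtain ⟨v, hv⟩ := ih
    obtain ⟨w, hw⟩ := exists_flipSettled_append hP a v
    refine ⟨v ++ w, ?_⟩
    rintro b (rfl | hb)
    exacts [hw, (hv b hb).append hP w]

end FlipSettled

def ReflectsEqv (Ψ : List Bool → ℕ) (P : List Bool → List ℕ) (ξ : ℕ → Option Bool) (m : ℕ) :
    Prop :=
  ∀ s t : List Bool, s.length = m → t.length = m → Compat ξ s → Compat ξ t → P s = P t →
    Eqv Ψ s t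

namespace ReflectsEqv

variable {Ψ : List Bool → ℕ} {P : List Bool → List ℕ} {ξ : ℕ → Option Bool} {m : ℕ}

theorem zero : ReflectsEqv Ψ P ξ 0 := by
  intro s t hs ht _ _ _
  rw [List.length_eq_zero_iff.mp hs, List.length_eq_zero_iff.mp ht]
  exact Eqv.refl _

theorem transplant (hP : IsPsiStar Ψ P) (hm : ReflectsEqv Ψ P ξ m) {y z : List Bool}
    (hy : Compat ξ y) (hz : Compat ξ z) (hlen : y.length = z.length) (hmy : m < y.length)
    (hdet : ∀ k, m < k → k < y.length → ξ k ≠ none) (hyz : P (y.take m) = P (z.take m)) :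
    Eqv Ψ y (z.take m ++ y.getD m false :: z.drop (m + 1)) ∧
      P y = P (z.take m ++ y.getD m false :: z.drop (m + 1)) := by
  have hsplit : y = y.take m ++ y.getD m false :: z.drop (m + 1) := by
    rw [← hy.drop_eq_drop hz hlen hdet]
    exact List.eq_take_append_getD_cons_drop false hmy
  have heqv : Eqv Ψ (y.take m) (z.take m) :=
    hm _ _ (List.length_take_of_le (by omega)) (List.length_take_of_le (by omega))
      (hy.of_prefix (List.take_prefix m y)) (hz.of_prefix (List.take_prefix m z)) hyz
  generalize y.getD m false = c at hsplit ⊢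
  rw [hsplit]
  exact ⟨heqv.append_right _, hP.append_eq_append heqv hyz _⟩

theorem add_block (hP : IsPsiStar Ψ P) (hm : ReflectsEqv Ψ P ξ m) {v : List Bool}
    (hv : ∀ b : List Bool, b.length = m → FlipSettled Ψ P b v)
    (hξ : ∀ j < v.length, ξ (m + j + 1) = v[j]?) :
    ReflectsEqv Ψ P ξ (m + v.length + 1) := by
  intro s t hs ht hcs hct hst
  have hdet : ∀ k, m < k → k < s.length → ξ k ≠ none := by
    intro k hk hks
    obtain ⟨j, rfl⟩ := Nat.exists_eq_add_of_lt hk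
    rw [hξ j (by omega), Ne, List.getElem?_eq_none_iff, not_le]
    omega
  obtain ⟨hs_eqv, hs_eq⟩ :=
    hm.transplant hP hcs hct (hs.trans ht.symm) (by omega) hdet (hP.take_eq_take hst m)
  rw [hct.drop_eq_block ht hξ] at hs_eqv hs_eq
  have ht_split : t = t.take m ++ t.getD m false :: v := by
    rw [← hct.drop_eq_block ht hξ]
    exact List.eq_take_append_getD_cons_drop false (by omega)
  have hflip := (hv (t.take m) (List.length_take_of_le (by omega))).eqv
    (hs_eq.symm.trans (hst.trans (congrArg P ht_split)))
  rw [ht_split]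
  exact hs_eqv.trans hflip

end ReflectsEqv

section Tree

variable {Ψ : List Bool → ℕ} {P : List Bool → List ℕ}

theorem exists_of_mem_succT_image (hP : IsPsiStar Ψ P) {W : Set (List Bool)}
    (hW : ∀ t ∈ W, ∀ u, u <+: t → u ∈ W) {s : List Bool} {ν : List ℕ}
    (hν : ν ∈ succT (P '' W) (P s)) :
    ∃ y ∈ W, y.length = s.length + 1 ∧ P y.dropLast = P s ∧ ν = P s ++ [Ψ y] := by
  obtain ⟨⟨w, hw, rfl⟩, hsw, hne, hmin⟩ := hν
  have hlt : s.length < w.length := by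
    have hle := hsw.length_le
    rw [hP.length_eq, hP.length_eq] at hle
    refine lt_of_le_of_ne hle fun h => hne (hsw.eq_of_length ?_)
    rw [hP.length_eq, hP.length_eq, h]
  set y := w.take (s.length + 1)
  have hyw : y <+: w := List.take_prefix _ _
  have hylen : y.length = s.length + 1 := List.length_take_of_le hlt
  have hsy : P s <+: P y :=
    List.prefix_of_prefix_length_le hsw (hP.prefix_mono hyw)
      (by rw [hP.length_eq, hP.length_eq, hylen]; omega)
  have hy_ne : y ≠ [] := List.ne_nil_of_length_pos (by omega)
  have hdrop : P y.dropLast = P s :=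
    List.eq_of_prefix_of_length_eq (hP.prefix_mono (List.dropLast_prefix y)) hsy
      (by simp [hP.length_eq, hylen])
  refine ⟨y, hW w hw y hyw, hylen, hdrop, ?_⟩
  rcases hmin (P y) ⟨y, hW w hw y hyw, rfl⟩ hsy (hP.prefix_mono hyw) with h | h
  · have := congrArg List.length h
    simp [hP.length_eq, hylen] at this
  · rw [← h, hP.eq_dropLast_append hy_ne, hdrop]

theorem isBinary_image_wall (hP : IsPsiStar Ψ P) {ξ : ℕ → Option Bool}
    (hlev : ∀ ℓ, ∃ m ≤ ℓ, ReflectsEqv Ψ P ξ m ∧ ∀ k, m < k → k ≤ ℓ → ξ k ≠ none) :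
    IsBinary (P '' Wall ξ) := by
  rintro _ ⟨s, hs, rfl⟩
  obtain ⟨m, hmℓ, hm, hdet⟩ := hlev s.length
  set z := s ++ [(ξ s.length).getD false]
  -- every successor is `P s ++ [Ψ y]`, and `Ψ y` is decided by the free bit `y[m]`
  have hsub : succT (P '' Wall ξ) (P s) ⊆
      Set.range fun c : Bool => P s ++ [Ψ (z.take m ++ c :: z.drop (m + 1))] := by
    intro ν hν
    obtain ⟨y, hy, hylen, hys, rfl⟩ :=
      exists_of_mem_succT_image hP (fun _ (ht : Compat ξ _) _ hu => ht.of_prefix hu) hν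
    have hyz : P (y.take m) = P (z.take m) := by
      rw [List.take_append_of_le_length hmℓ, ← hP.take_eq_take hys m, List.dropLast_eq_take,
        List.take_take, hylen, Nat.add_sub_cancel, min_eq_left hmℓ]
    obtain ⟨hyz_eqv, -⟩ := hm.transplant hP hy (Compat.append_getD hs) (by simp [hylen])
      (by omega) (fun k h1 h2 => hdet k h1 (by omega)) hyz
    exact ⟨y.getD m false, by simpa using (hyz_eqv []).symm⟩
  have hfin : (Set.range fun c : Bool => P s ++ [Ψ (z.take m ++ c :: z.drop (m + 1))]).Finite :=
    Set.finite_range _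
  refine ⟨hfin.subset hsub, (Set.ncard_le_ncard hsub hfin).trans ?_⟩
  rw [← Nat.card_coe_set_eq]
  exact (Finite.card_range_le _).trans (by simp)

end Tree

def freePos (blk : ℕ → List Bool) : ℕ → ℕ
  | 0 => 0
  | n + 1 => freePos blk n + (blk (freePos blk n)).length + 1

open Classical in
/-- The pattern `⊥ blk(m₀) ⊥ blk(m₁) ⊥ ⋯`, undefined exactly at the positions
`mₙ = freePos blk n`. -/
noncomputable def blockPattern (blk : ℕ → List Bool) (k : ℕ) : Option Bool :=
  if h : ∃ n, freePos blk n < k ∧ k < freePos blk (n + 1) then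
    (blk (freePos blk (Nat.find h)))[k - freePos blk (Nat.find h) - 1]?
  else none

section BlockPattern

variable {blk : ℕ → List Bool}

theorem freePos_strictMono : StrictMono (freePos blk) :=
  strictMono_nat_of_lt_succ fun n => by simp only [freePos]; omega

theorem exists_freePos_le_lt (ℓ : ℕ) : ∃ n, freePos blk n ≤ ℓ ∧ ℓ < freePos blk (n + 1) := by
  have h : ∃ n, ℓ < freePos blk (n + 1) := ⟨ℓ, freePos_strictMono.le_apply⟩
  refine ⟨Nat.find h, ?_, Nat.find_spec h⟩
  rcases hn : Nat.find h with _ | n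
  · exact Nat.zero_le ℓ
  · exact not_lt.mp (Nat.find_min h (hn ▸ Nat.lt_succ_self n))

theorem eq_of_freePos_lt_lt {n n' k : ℕ} (h : freePos blk n < k ∧ k < freePos blk (n + 1))
    (h' : freePos blk n' < k ∧ k < freePos blk (n' + 1)) : n = n' := by
  have := freePos_strictMono.lt_iff_lt.mp (h.1.trans h'.2)
  have := freePos_strictMono.lt_iff_lt.mp (h'.1.trans h.2)
  omega

theorem blockPattern_freePos (n : ℕ) : blockPattern blk (freePos blk n) = none := by
  rw [blockPattern, dif_neg]
  rintro ⟨n', h1, h2⟩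
  have := freePos_strictMono.lt_iff_lt.mp h1
  have := freePos_strictMono.lt_iff_lt.mp h2
  omega

theorem blockPattern_freePos_add {n j : ℕ} (hj : j < (blk (freePos blk n)).length) :
    blockPattern blk (freePos blk n + j + 1) = (blk (freePos blk n))[j]? := by
  have hk : freePos blk n < freePos blk n + j + 1 ∧ freePos blk n + j + 1 < freePos blk (n + 1) :=
    ⟨by omega, by simp only [freePos]; omega⟩
  rw [blockPattern, dif_pos ⟨n, hk⟩]
  generalize_proofs h
  rw [← eq_of_freePos_lt_lt hk (Nat.find_spec h)]
  congr 1
  omega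

theorem blockPattern_ne_none {n k : ℕ} (h₁ : freePos blk n < k) (h₂ : k < freePos blk (n + 1)) :
    blockPattern blk k ≠ none := by
  obtain ⟨j, rfl⟩ := Nat.exists_eq_add_of_lt h₁
  have hj : j < (blk (freePos blk n)).length := by simp only [freePos] at h₂; omega
  simpa [blockPattern_freePos_add hj] using hj

end BlockPattern

theorem silver_main (Ψ : List Bool → ℕ) (P : List Bool → List ℕ) (hP : IsPsiStar Ψ P) :
    ∃ ξ : ℕ → Option Bool, {k : ℕ | ξ k = none}.Infinite ∧
      IsBinary (P '' Wall ξ) := by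
  choose blk hblk using fun m => exists_flipSettled_of_finite hP (List.finite_length_eq Bool m)
  have hlev : ∀ n, ReflectsEqv Ψ P (blockPattern blk) (freePos blk n) := by
    intro n
    induction n with
    | zero => exact ReflectsEqv.zero
    | succ n ih => exact ih.add_block hP (hblk _) fun j hj => blockPattern_freePos_add hj
  refine ⟨blockPattern blk, Set.infinite_of_injective_forall_mem
    freePos_strictMono.injective blockPattern_freePos,
    isBinary_image_wall hP fun ℓ => ?_⟩
  obtain ⟨n, hnℓ, hℓn⟩ := exists_freePos_le_lt (blk := blk) ℓ
  exact ⟨freePos blk n, hnℓ, hlev n, fun k hk hkℓ => blockPattern_ne_none hk (by omega)⟩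
end

section
/- Fusion lemma for n-Silver forcing: suppose ⟨f_i : i < ω⟩ is a sequence of conditions in S_n such that f_i ≤*_{i} f_{i+1} for every i, where f ≤*_i g means f ⊆ g and FP_j(f) = FP_j(g) for all j < ⌊i/4⌋. Then the union f = ⋃_{i<ω} f_i is a condition in S_n, i.e., f is a partial function from ω to n whose domain has infinite complement, and f_i ≤ f for all i. -/
/-- A condition in the `n`-Silver forcing: a partial function `ω ⇀ n`
whose domain has infinite complement. -/
def Silver (n : ℕ) (f : ℕ → Option (Fin n)) : Prop :=
  {k : ℕ | f k = none}.Infinite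

/-- `FP f i`: the `i`-th free point of `f`, i.e. the `i`-th element
(in increasing order) of `ω ∖ dom f`. -/
noncomputable def FP {n : ℕ} (f : ℕ → Option (Fin n)) (i : ℕ) : ℕ :=
  Nat.nth (fun k => f k = none) i

/-- `f * σ`: the extension of `f` putting `σ(i)` at the `i`-th free point of `f`
for `i < length σ`. -/
noncomputable def star {n : ℕ} (f : ℕ → Option (Fin n)) (σ : List (Fin n)) :
    ℕ → Option (Fin n) := fun k =>
  match f k with
  | some v => some v
  | none => σ[Set.ncard {j | j < k ∧ f j = none}]?

/-- `f ≤*_i g`. -/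
def leStar {n : ℕ} (i : ℕ) (f g : ℕ → Option (Fin n)) : Prop :=
  (∀ k v, f k = some v → g k = some v) ∧ ∀ j < i / 4, FP f j = FP g j

theorem silver_fusion (n : ℕ) (hn : 2 ≤ n) (f : ℕ → (ℕ → Option (Fin n)))
    (hcond : ∀ i, Silver n (f i))
    (hchain : ∀ i, leStar i (f i) (f (i + 1))) :
    ∃ F : ℕ → Option (Fin n),
      (∀ k v, F k = some v ↔ ∃ i, f i k = some v) ∧
      Silver n F ∧
      ∀ i k v, f i k = some v → F k = some v := by
  classical
  have mono : ∀ i j k v, i ≤ j → f i k = some v → f j k = some v := by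
    intro i j k v hij h
    induction j, hij using Nat.le_induction with
    | base => exact h
    | succ m hm ih => exact (hchain m).1 k v ih
  -- choose F
  have hF : ∀ k, ∃ o : Option (Fin n), ∀ v, o = some v ↔ ∃ i, f i k = some v := by
    intro k
    by_cases h : ∃ i v, f i k = some v
    · obtain ⟨i, v, hiv⟩ := h
      refine ⟨some v, fun w => ⟨?_, ?_⟩⟩
      · intro hw
        obtain rfl : v = w := Option.some_injective _ hw
        exact ⟨i, hiv⟩
      · rintro ⟨i', hi'⟩
        have h1 := mono i (max i i') k v (le_max_left _ _) hiv
        have h2 := mono i' (max i i') k w (le_max_right _ _) hi'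
        rw [h1] at h2
        exact h2
    · refine ⟨none, fun v => ⟨fun hv => by simp at hv, fun ⟨i, hi⟩ => absurd ⟨i, v, hi⟩ h⟩⟩
  choose F hFspec using hF
  -- stability of free points
  have stab : ∀ j m, 4 * (j + 1) ≤ m → FP (f m) j = FP (f (4 * (j + 1))) j := by
    intro j m hm
    induction m, hm using Nat.le_induction with
    | base => rfl
    | succ m hm ih =>
      have hj : j < m / 4 := by
        have : j + 1 ≤ m / 4 := (Nat.le_div_iff_mul_le (by norm_num)).2 (by linarith)
        omega
      rw [← ((hchain m).2 j hj), ih]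
  set x : ℕ → ℕ := fun j => FP (f (4 * (j + 1))) j with hxdef
  have hx_none : ∀ j m, f m (x j) = none := by
    intro j m
    set M := max m (4 * (j + 1)) with hM
    have hxM : FP (f M) j = x j := stab j M (le_max_right _ _)
    have hMnone : f M (x j) = none := by
      rw [← hxM]
      exact Nat.nth_mem_of_infinite (hcond M) j
    cases h : f m (x j) with
    | none => rfl
    | some v =>
      have := mono m M (x j) v (le_max_left _ _) h
      rw [hMnone] at this; exact absurd this (by simp)
  have hx_inj : Function.Injective x := by
    have hsm : StrictMono x := by
      intro j j' hjj'
      have h1 : x j = FP (f (4 * (j' + 1))) j :=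
        (stab j (4 * (j' + 1)) (by omega)).symm
      rw [h1]
      exact Nat.nth_strictMono (hcond (4 * (j' + 1))) hjj'
    exact hsm.injective
  refine ⟨F, fun k v => hFspec k v, ?_, fun i k v h => (hFspec k v).2 ⟨i, h⟩⟩
  apply Set.infinite_of_injective_forall_mem hx_inj
  intro j
  show F (x j) = none
  cases h : F (x j) with
  | none => rfl
  | some v =>
    obtain ⟨i, hi⟩ := (hFspec (x j) v).1 h
    rw [hx_none j i] at hi; exact absurd hi (by simp)
end

section
/- Suppose ξ is a partial function from ω to 2 with co-infinite domain, N ∈ ω, and suppose: (i) T^N(ξ↾N) is a binary tree, and (ii) for any two sequences s, t ∈ 2^N compatible with ξ, if s ∼ t then s ≡ t. If additionally for every m ≥ N the extension maintains that any two compatible sequences of length m that are ∼-equivalent are ≡-equivalent, then the full tree T(ξ) is binary. -/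
section Aux
variable {Ψ : List Bool → ℕ} {P : List Bool → List ℕ}

lemma lenP (hP : IsPsiStar Ψ P) : ∀ t, (P t).length = t.length := by
  intro t
  induction t using List.reverseRecOn with
  | nil => simp [hP.1]
  | append_singleton t i ih => simp [hP.2 t i, ih]

lemma prefP (hP : IsPsiStar Ψ P) : ∀ {s t : List Bool}, s <+: t → P s <+: P t := by
  intro s t
  induction t using List.reverseRecOn with
  | nil => intro h; simp_all
  | append_singleton t i ih =>
    intro h
    rcases List.prefix_concat_iff.1 h with h | h
    · exact h ▸ List.prefix_rfl
    · exact (ih h).trans (by rw [hP.2 t i]; exact List.prefix_append _ _)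

lemma takeP (hP : IsPsiStar Ψ P) (t : List Bool) (n : ℕ) :
    P (t.take n) = (P t).take n := by
  have h1 : P (t.take n) <+: (P t).take n := by
    rw [List.prefix_take_iff]
    exact ⟨prefP hP (List.take_prefix n t), by rw [lenP hP]; simp⟩
  exact h1.eq_of_length (by rw [lenP hP, List.length_take, List.length_take, lenP hP])

lemma compat_prefix {ξ : ℕ → Option Bool} {s t : List Bool} (h : s <+: t)
    (hc : Compat ξ t) : Compat ξ s := by
  obtain ⟨r, rfl⟩ := h
  intro k hk b hb
  have := hc k (by simp; omega) b hb
  rwa [List.getElem?_append_left hk] at this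

/-- characterization of succT in a prefix-closed set. -/
lemma succT_eq {T : Set (List ℕ)} (hT : ∀ t ∈ T, ∀ n, t.take n ∈ T) (η : List ℕ) :
    succT T η = {ν | ν ∈ T ∧ η <+: ν ∧ ν.length = η.length + 1} := by
  ext ν
  constructor
  · rintro ⟨hν, hpre, hne, hmin⟩
    refine ⟨hν, hpre, ?_⟩
    have hlt : η.length < ν.length := by
      rcases lt_or_eq_of_le hpre.length_le with h | h
      · exact h
      · exact absurd (hpre.eq_of_length h) hne
    set ρ := ν.take (η.length + 1) with hρ
    have hρT : ρ ∈ T := hT ν hν _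
    have hρpre : η <+: ρ := by
      rw [hρ, List.prefix_take_iff]
      exact ⟨hpre, by omega⟩
    have hρν : ρ <+: ν := List.take_prefix _ _
    have hρlen : ρ.length = η.length + 1 := by
      rw [hρ, List.length_take]; omega
    rcases hmin ρ hρT hρpre hρν with h | h
    · exact absurd (h ▸ hρlen) (by omega)
    · rw [← h, hρlen]
  · rintro ⟨hν, hpre, hlen⟩
    refine ⟨hν, hpre, fun h => by simp [← h] at hlen, ?_⟩
    intro ρ hρ h1 h2
    have := h1.length_le
    have := h2.length_le
    rcases lt_or_eq_of_le h1.length_le with h | h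
    · right; exact h2.eq_of_length (by omega)
    · left; exact (h1.eq_of_length h).symm
end Aux
theorem binary_limit (Ψ : List Bool → ℕ) (P : List Bool → List ℕ)
    (hP : IsPsiStar Ψ P) (ξ : ℕ → Option Bool)
    (hco : {k : ℕ | ξ k = none}.Infinite) (N : ℕ)
    (hbin : IsBinary (P '' Wfin ξ N))
    (hN : ∀ s t : List Bool, s.length = N → t.length = N →
      Compat ξ s → Compat ξ t → P s = P t → Eqv Ψ s t)
    (hup : ∀ m, N ≤ m → ∀ s t : List Bool, s.length = m → t.length = m →
      Compat ξ s → Compat ξ t → P s = P t → Eqv Ψ s t) :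
    IsBinary (P '' Wall ξ) := by
  have hWall : ∀ t ∈ P '' Wall ξ, ∀ n, t.take n ∈ P '' Wall ξ := by
    rintro _ ⟨u, hu, rfl⟩ n
    exact ⟨u.take n, compat_prefix (List.take_prefix n u) hu, takeP hP u n⟩
  have hWfin : ∀ t ∈ P '' Wfin ξ N, ∀ n, t.take n ∈ P '' Wfin ξ N := by
    rintro _ ⟨u, ⟨hlen, hu⟩, rfl⟩ n
    exact ⟨u.take n, ⟨by simp; omega, compat_prefix (List.take_prefix n u) hu⟩,
      takeP hP u n⟩
  rintro η ⟨s₀, hs₀, rfl⟩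
  by_cases hm : s₀.length < N
  · have hsub : succT (P '' Wall ξ) (P s₀) = succT (P '' Wfin ξ N) (P s₀) := by
      rw [succT_eq hWall, succT_eq hWfin]
      ext ν
      simp only [Set.mem_setOf_eq]
      constructor
      · rintro ⟨⟨u, hu, rfl⟩, hpre, hlen⟩
        refine ⟨⟨u, ⟨?_, hu⟩, rfl⟩, hpre, hlen⟩
        have h1 := lenP hP u; have h2 := lenP hP s₀; omega
      · rintro ⟨⟨u, ⟨_, hu⟩, rfl⟩, hpre, hlen⟩
        exact ⟨⟨u, hu, rfl⟩, hpre, hlen⟩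
    rw [hsub]
    exact hbin (P s₀) ⟨s₀, ⟨by omega, hs₀⟩, rfl⟩
  · push_neg at hm
    have key : succT (P '' Wall ξ) (P s₀) ⊆
        {P s₀ ++ [Ψ (s₀ ++ [false])], P s₀ ++ [Ψ (s₀ ++ [true])]} := by
      rw [succT_eq hWall]
      rintro ν ⟨⟨u, hu, rfl⟩, hpre, hlen⟩
      have hul : u.length = s₀.length + 1 := by
        have h1 := lenP hP u; have h2 := lenP hP s₀; omega
      have hune : u ≠ [] := by intro h; simp [h] at hul
      set s := u.dropLast with hs
      set i := u.getLast hune with hi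
      have hu' : s ++ [i] = u := List.dropLast_append_getLast hune
      have hslen : s.length = s₀.length := by
        rw [hs, List.length_dropLast]; omega
      have hscompat : Compat ξ s := compat_prefix (List.dropLast_prefix u) hu
      have hPs : P s = P s₀ := by
        have h1 : P s <+: P u := prefP hP (hu' ▸ List.prefix_append s [i])
        exact (List.prefix_of_prefix_length_le h1 hpre
          (by rw [lenP hP, lenP hP]; omega)).eq_of_length
          (by rw [lenP hP, lenP hP]; omega)
      have heqv := hup s₀.length hm s s₀ hslen rfl hscompat hs₀ hPs
      have hval : P u = P s₀ ++ [Ψ (s₀ ++ [i])] := by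
        rw [← hu', hP.2 s i, hPs, heqv [i]]
      rcases i.eq_false_or_eq_true with h | h <;> rw [h] at hval <;> simp [hval]
    constructor
    · exact ((Set.finite_singleton _).insert _).subset key
    · refine le_trans (Set.ncard_le_ncard key ((Set.finite_singleton _).insert _)) ?_
      exact le_trans (Set.ncard_insert_le _ _) (by simp [Set.ncard_singleton])
end
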